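/- arXiv:2007.01325 — 7 statements merged into one kernel-verified Lean document; each statement's English description precedes it below -/
import Mathlib

section
/- Let n be a natural number, let E = EuclideanSpace ℝ (Fin n), let Y be a metric space, and let P : E → Y be a submetry. Fix y ∈ Y, set L = P ⁻¹' {y}, and assume L is nonempty. Then L is a set of positive reach in E: there exists an open set U ⊆ E with L ⊆ U such that for every x ∈ U there is a unique point p with p ∈ L and dist x p = Metric.infDist x L (a unique nearest point of L to x). -/
/-!
Let `L = P⁻¹(y)` and suppose `x` has two nearest points `p ≠ p'` in `L`, at distance `t`,
with midpoint `m`, `s = d(p, p') / 2` and `ρ = d(y, P m) = d(m, L)`. Apollonius' theorem at `x`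
gives `d(x, m)² = t² - s²`, and `t ≤ d(x, m) + ρ` then yields `s² ≤ 2tρ`. Applied at a point
over `z ∈ Y` nearest to `m`, it gives `d(y, z)² ≤ s² + d(P m, z)² ≤ d(P m, z)² + 2tρ`.
If the reach were zero, such points `q = P m` with `0 < ρ ≤ t` would exist at every scale `t`.
Lift points `q_k`, at scales chosen recursively so that each scale is at most half the
previous `ρ`, to points `ξ_k` at distance `ρ_k` from a fixed `p₀ ∈ L`. Since `P` is
1-Lipschitz, `d(ξ_j, ξ_k) ≥ d(q_j, q_k)` forces the directions of the `ξ_k - p₀` to make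
pairwise angles at least `arccos (3/4)`, which compactness of the unit sphere forbids.
-/

/-- A map `P : X → Y` between metric spaces is a submetry if it maps every open
ball onto the open ball of the same radius around the image of the center. -/
def IsSubmetry {X Y : Type*} [MetricSpace X] [MetricSpace Y] (P : X → Y) : Prop :=
  ∀ (x : X) (r : ℝ), 0 < r → P '' Metric.ball x r = Metric.ball (P x) r

open Metric
open scoped RealInnerProductSpace

theorem IsCompact.exists_dist_lt_of_forall_mem {α : Type*} [PseudoMetricSpace α] {K : Set α}
    (hK : IsCompact K) {u : ℕ → α} (hu : ∀ k, u k ∈ K) {δ : ℝ} (hδ : 0 < δ) :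
    ∃ j k, j < k ∧ dist (u j) (u k) < δ := by
  obtain ⟨_, -, φ, hφ, hlim⟩ := hK.tendsto_subseq hu
  obtain ⟨N, hN⟩ := Metric.cauchySeq_iff'.1 hlim.cauchySeq δ hδ
  exact ⟨φ N, φ (N + 1), hφ N.lt_succ_self, by rw [dist_comm]; exact hN _ N.le_succ⟩

theorem exists_lt_inner_of_forall_ne_zero {E : Type*} [NormedAddCommGroup E]
    [InnerProductSpace ℝ E] [ProperSpace E] {c : ℝ} (hc : c < 1) {a : ℕ → E}
    (ha : ∀ k, a k ≠ 0) : ∃ j k, j < k ∧ c * (‖a j‖ * ‖a k‖) < ⟪a j, a k⟫ := by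
  set u : ℕ → E := fun k => ‖a k‖⁻¹ • a k
  have hu : ∀ k, u k ∈ sphere (0 : E) 1 := fun k => by simp [u, norm_smul, ha k]
  obtain ⟨j, k, hjk, hd⟩ := (isCompact_sphere (0 : E) 1).exists_dist_lt_of_forall_mem hu
    (Real.sqrt_pos.2 (by linarith : 0 < 2 * (1 - c)))
  have hpos : 0 < ‖a j‖ * ‖a k‖ := mul_pos (norm_pos_iff.2 (ha j)) (norm_pos_iff.2 (ha k))
  have huu : ⟪u j, u k⟫ = ⟪a j, a k⟫ / (‖a j‖ * ‖a k‖) := by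
    simp only [u, real_inner_smul_left, real_inner_smul_right]
    field_simp
  have hdist : dist (u j) (u k) ^ 2 = 2 - 2 * ⟪u j, u k⟫ := by
    rw [dist_eq_norm, norm_sub_sq_real, mem_sphere_zero_iff_norm.1 (hu j),
      mem_sphere_zero_iff_norm.1 (hu k)]
    ring
  have : c < ⟪u j, u k⟫ := by
    have := (Real.lt_sqrt dist_nonneg).1 hd
    linarith
  exact ⟨j, k, hjk, by rwa [huu, lt_div_iff₀ hpos] at this⟩

/-- For `Y` Euclidean and `y = 0`: `Y` lies in the half-space `⟪z, q⟫ ≤ ‖q‖ (‖q‖ / 2 + ε)`. -/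
def AlmostCloserThan {Y : Type*} [MetricSpace Y] (y q : Y) (ε : ℝ) : Prop :=
  ∀ z : Y, dist y z ^ 2 ≤ dist q z ^ 2 + 2 * ε * dist y q

theorem AlmostCloserThan.mono {Y : Type*} [MetricSpace Y] {y q : Y} {ε ε' : ℝ}
    (h : AlmostCloserThan y q ε) (hε : ε ≤ ε') : AlmostCloserThan y q ε' := fun z => by
  nlinarith [h z, dist_nonneg (x := y) (y := q)]

namespace IsSubmetry

section MetricSpace

variable {X Y : Type*} [MetricSpace X] [MetricSpace Y] {P : X → Y}

theorem dist_le (hP : IsSubmetry P) (x x' : X) : dist (P x) (P x') ≤ dist x x' := by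
  by_contra! h
  have : P x' ∈ ball (P x) (dist (P x) (P x')) :=
    hP x _ (dist_nonneg.trans_lt h) ▸ Set.mem_image_of_mem P (mem_ball'.2 h)
  exact (mem_ball'.1 this).false

theorem continuous (hP : IsSubmetry P) : Continuous P :=
  (LipschitzWith.mk_one hP.dist_le).continuous

theorem exists_dist_lt (hP : IsSubmetry P) {x : X} {z : Y} {r : ℝ} (hr : dist (P x) z < r) :
    ∃ x', P x' = z ∧ dist x x' < r := by
  obtain ⟨x', hx', hPx'⟩ : z ∈ P '' ball x r :=
    (hP x r (dist_nonneg.trans_lt hr)).symm ▸ mem_ball'.2 hr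
  exact ⟨x', hPx', mem_ball'.1 hx'⟩

theorem infDist_preimage_singleton (hP : IsSubmetry P) (x : X) (z : Y) :
    infDist x (P ⁻¹' {z}) = dist (P x) z := by
  have hne : (P ⁻¹' {z}).Nonempty :=
    let ⟨x', hx', _⟩ := hP.exists_dist_lt (lt_add_one (dist (P x) z)); ⟨x', hx'⟩
  refine le_antisymm (le_of_forall_gt fun r hr => ?_) ((le_infDist hne).2 fun x' hx' => ?_)
  · obtain ⟨x', hx', hd⟩ := hP.exists_dist_lt hr
    exact (infDist_lt_iff hne).2 ⟨x', hx', hd⟩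
  · rw [← (hx' : P x' = z)]
    exact hP.dist_le x x'

theorem exists_dist_eq [ProperSpace X] (hP : IsSubmetry P) (x : X) (z : Y) :
    ∃ x', P x' = z ∧ dist x x' = dist (P x) z := by
  obtain ⟨x₁, hx₁, -⟩ := hP.exists_dist_lt (lt_add_one (dist (P x) z))
  obtain ⟨x', hx', hd⟩ :=
    (isClosed_singleton.preimage hP.continuous).exists_infDist_eq_dist ⟨x₁, hx₁⟩ x
  exact ⟨x', hx', by rw [← hd, hP.infDist_preimage_singleton]⟩

end MetricSpace

section InnerProductSpace

variable {E Y : Type*} [NormedAddCommGroup E] [InnerProductSpace ℝ E] [MetricSpace Y]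
  {P : E → Y} {y : Y}

theorem dist_sq_le_half_dist_sq_add_dist_midpoint_sq [ProperSpace E] (hP : IsSubmetry P)
    {p p' : E} (hp : P p = y) (hp' : P p' = y) (z : Y) :
    dist y z ^ 2 ≤ (dist p p' / 2) ^ 2 + dist (P (midpoint ℝ p p')) z ^ 2 := by
  obtain ⟨ζ, rfl, hζ⟩ := hP.exists_dist_eq (midpoint ℝ p p') z
  have hfar : ∀ q, P q = y → dist y (P ζ) ^ 2 ≤ dist ζ q ^ 2 := fun q hq => by
    rw [dist_comm ζ, ← hq]
    exact pow_le_pow_left₀ dist_nonneg (hP.dist_le q ζ) 2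
  have := EuclideanGeometry.dist_sq_add_dist_sq_eq_two_mul_dist_midpoint_sq_add_half_dist_sq
    ζ p p'
  rw [dist_comm ζ (midpoint ℝ p p'), hζ] at this
  linarith [hfar p hp, hfar p' hp']

theorem almostCloserThan_of_two_nearest [ProperSpace E] (hP : IsSubmetry P) {x p p' : E}
    (hp : P p = y) (hp' : P p' = y) (hpp' : p ≠ p') (hmin : ∀ q, P q = y → dist x p ≤ dist x q)
    (hxp' : dist x p' = dist x p) :
    0 < dist y (P (midpoint ℝ p p')) ∧ dist y (P (midpoint ℝ p p')) ≤ dist x p ∧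
      AlmostCloserThan y (P (midpoint ℝ p p')) (dist x p) := by
  set m := midpoint ℝ p p' with hm
  set t := dist x p
  set s := dist p p' / 2 with hs_def
  set ρ := dist y (P m)
  have hs : 0 < s := by have := dist_pos.2 hpp'; positivity
  have hst : s ≤ t := by linarith [dist_triangle_left p p' x]
  have hρs : ρ ≤ s := by
    have := hP.dist_le p m
    rwa [hp, dist_left_midpoint, Real.norm_two, ← div_eq_inv_mul] at this
  have hxm : dist x m ^ 2 = t ^ 2 - s ^ 2 := by
    have := EuclideanGeometry.dist_sq_add_dist_sq_eq_two_mul_dist_midpoint_sq_add_half_dist_sq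
      x p p'
    rw [hxp', ← hm, ← hs_def] at this
    linarith
  have htρ : t ≤ dist x m + ρ := by
    obtain ⟨ζ, hζ, hmζ⟩ := hP.exists_dist_eq m y
    calc t ≤ dist x ζ := hmin ζ hζ
      _ ≤ dist x m + dist m ζ := dist_triangle x m ζ
      _ = dist x m + ρ := by rw [hmζ, dist_comm (P m)]
  have hs2 : s ^ 2 ≤ 2 * t * ρ := by
    have : (t - ρ) ^ 2 ≤ dist x m ^ 2 :=
      pow_le_pow_left₀ (by linarith) (by linarith) 2
    nlinarith
  refine ⟨by nlinarith, hρs.trans hst, fun z => ?_⟩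
  have := hP.dist_sq_le_half_dist_sq_add_dist_midpoint_sq hp hp' z
  rw [← hm, ← hs_def] at this
  show dist y z ^ 2 ≤ dist (P m) z ^ 2 + 2 * t * ρ
  linarith

theorem inner_le_of_almostCloserThan (hP : IsSubmetry P) {p₀ ξ ξ' : E} {q q' : Y} {ε : ℝ}
    (hξ : P ξ = q) (hdξ : dist p₀ ξ = dist (P p₀) q) (hξ' : P ξ' = q')
    (hdξ' : dist p₀ ξ' = dist (P p₀) q') (hq' : AlmostCloserThan (P p₀) q' ε)
    (hε : 2 * ε ≤ dist (P p₀) q) (hq'ε : dist (P p₀) q' ≤ ε) :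
    ⟪ξ - p₀, ξ' - p₀⟫ ≤ 3 / 4 * (‖ξ - p₀‖ * ‖ξ' - p₀‖) := by
  rw [← dist_eq_norm, ← dist_eq_norm, dist_comm ξ, dist_comm ξ', hdξ, hdξ']
  have hξξ' : dist q' q ^ 2 ≤ ‖(ξ' - p₀) - (ξ - p₀)‖ ^ 2 := by
    rw [sub_sub_sub_cancel_right, ← dist_eq_norm, ← hξ, ← hξ']
    exact pow_le_pow_left₀ dist_nonneg (hP.dist_le ξ' ξ) 2
  rw [norm_sub_sq_real, ← dist_eq_norm, ← dist_eq_norm, dist_comm ξ, dist_comm ξ', hdξ, hdξ',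
    real_inner_comm] at hξξ'
  nlinarith [hq' q, dist_nonneg (x := P p₀) (y := q')]

theorem exists_forall_not_almostCloserThan [ProperSpace E] (hP : IsSubmetry P) (p₀ : E) :
    ∃ ε > 0, ∀ q, 0 < dist (P p₀) q → dist (P p₀) q ≤ ε → ¬AlmostCloserThan (P p₀) q ε := by
  by_contra! h
  have : Nonempty Y := ⟨P p₀⟩
  choose! q hq₀ hqε hq using h
  obtain ⟨ε, hε₀, hεs⟩ : ∃ ε : ℕ → ℝ, ε 0 = 1 ∧ ∀ k, ε (k + 1) = dist (P p₀) (q (ε k)) / 2 :=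
    ⟨fun k => Nat.rec 1 (fun _ e => dist (P p₀) (q e) / 2) k, rfl, fun _ => rfl⟩
  have hpos : ∀ k, 0 < ε k := fun k => by
    induction k with
    | zero => simp [hε₀]
    | succ k ih => rw [hεs]; linarith [hq₀ _ ih]
  have hanti : Antitone ε := antitone_nat_of_succ_le fun k => by
    rw [hεs]; linarith [hqε _ (hpos k), hpos k]
  choose ξ hξ hdξ using fun k => hP.exists_dist_eq p₀ (q (ε k))
  have hne : ∀ k, ξ k - p₀ ≠ 0 := fun k => by
    rw [← norm_pos_iff, ← dist_eq_norm, dist_comm, hdξ]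
    exact hq₀ _ (hpos k)
  obtain ⟨j, k, hjk, hinner⟩ := exists_lt_inner_of_forall_ne_zero (c := 3 / 4) (by norm_num) hne
  have hscale : 2 * ε k ≤ dist (P p₀) (q (ε j)) := by
    linarith [hanti (Nat.succ_le_of_lt hjk), hεs j]
  exact hinner.not_ge (hP.inner_le_of_almostCloserThan (hξ j) (hdξ j) (hξ k) (hdξ k)
    (hq _ (hpos k)) hscale (hqε _ (hpos k)))

end InnerProductSpace

end IsSubmetry

/-- Fibers of a submetry from a Euclidean space have positive reach. -/
theorem fiber_of_submetry_positive_reach (n : ℕ) {Y : Type*} [MetricSpace Y]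
    (P : EuclideanSpace ℝ (Fin n) → Y) (hP : IsSubmetry P) (y : Y)
    (L : Set (EuclideanSpace ℝ (Fin n))) (hL : L = P ⁻¹' {y}) (hne : L.Nonempty) :
    ∃ U : Set (EuclideanSpace ℝ (Fin n)), IsOpen U ∧ L ⊆ U ∧
      ∀ x ∈ U, ∃! p, p ∈ L ∧ dist x p = Metric.infDist x L := by
  subst hL
  obtain ⟨p₀, hp₀⟩ := hne
  obtain rfl : P p₀ = y := hp₀
  obtain ⟨ε, hε, hsmall⟩ := hP.exists_forall_not_almostCloserThan p₀
  refine ⟨{x | infDist x (P ⁻¹' {P p₀}) < ε},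
    isOpen_lt (continuous_infDist_pt _) continuous_const,
    fun p hp => by simpa [infDist_zero_of_mem hp] using hε, fun x hx => ?_⟩
  obtain ⟨p, hp, hxp⟩ :=
    (isClosed_singleton.preimage hP.continuous).exists_infDist_eq_dist ⟨p₀, rfl⟩ x
  refine ⟨p, ⟨hp, hxp.symm⟩, fun p' ⟨hp', hxp'⟩ => by_contra fun hpp' => ?_⟩
  have hmin : ∀ q, P q = P p₀ → dist x p ≤ dist x q := fun q hq =>
    hxp ▸ infDist_le_dist_of_mem hq
  have htε : dist x p ≤ ε := by rw [← hxp]; exact hx.le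
  obtain ⟨hρ, hρt, hcrit⟩ :=
    hP.almostCloserThan_of_two_nearest hp hp' (Ne.symm hpp') hmin (hxp'.trans hxp)
  exact hsmall _ hρ (hρt.trans htε) (hcrit.mono htε)
end

section
/- Let n be a natural number, let E = EuclideanSpace ℝ (Fin n), and let C ⊆ E be a nonempty closed set. Then the map x ↦ Metric.infNndist x C, from E to the nonnegative reals ℝ≥0 (with the metric dist a b = |a − b|), is a submetry if and only if C is convex (Convex ℝ C) and C has empty interior. -/
/-! The distance function `f = infDist · C` is 1-Lipschitz, so it is a submetry iff every value
in `(f x - r, f x + r) ∩ [0, ∞)` is attained on `ball x r`. If `C` is convex with empty interior,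
every `x` lies on a ray `t ↦ p + t • w` (`t ≥ 0`) from a point `p ∈ C` in a unit direction `w`
normal to `C` at `p`: the direction from the nearest point of `C` if `x ∉ C`, and a normal of the
proper affine span of `C` if `x ∈ C`. Along such a ray `f` is `t ↦ t`, so all values are attained.
Conversely, `f` vanishes near an interior point of `C`, and if a point `m = α • a + β • b` with
`a, b ∈ C` lies outside `C`, the submetry yields points near `m` that are far from `C`, hence from
`a` and `b`; this contradicts
`‖y - m‖ ^ 2 = α * ‖y - a‖ ^ 2 + β * ‖y - b‖ ^ 2 - α * β * ‖a - b‖ ^ 2`. -/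

open Metric

theorem LipschitzWith.isSubmetry {X Y : Type*} [MetricSpace X] [MetricSpace Y] {P : X → Y}
    (hP : LipschitzWith 1 P) (h : ∀ x r, 0 < r → ball (P x) r ⊆ P '' ball x r) :
    IsSubmetry P := fun x r hr =>
  (Set.mapsTo_iff_image_subset.1 (by simpa using hP.mapsTo_ball one_ne_zero x r)).antisymm
    (h x r hr)

section MetricSpace

variable {X : Type*} [MetricSpace X] {C : Set X}

theorem IsSubmetry.exists_infDist_eq (h : IsSubmetry fun x => infNndist x C) (x : X) {r v : ℝ}
    (hr : 0 < r) (hv₀ : 0 ≤ v) (hv : |v - infDist x C| < r) :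
    ∃ y, dist y x < r ∧ infDist y C = v := by
  have hmem : v.toNNReal ∈ ball (infNndist x C) r := by
    rwa [mem_ball, NNReal.dist_eq, Real.coe_toNNReal _ hv₀, coe_infNndist]
  rw [← h x r hr] at hmem
  obtain ⟨y, hy, hyv⟩ := hmem
  refine ⟨y, hy, ?_⟩
  rw [← coe_infNndist, show infNndist y C = _ from hyv, Real.coe_toNNReal _ hv₀]

theorem IsSubmetry.interior_eq_empty (h : IsSubmetry fun x => infNndist x C) :
    interior C = ∅ := by
  refine Set.eq_empty_of_forall_notMem fun x hx => ?_
  obtain ⟨ε, hε, hball⟩ := Metric.isOpen_iff.1 isOpen_interior x hx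
  obtain ⟨y, hy, hyε⟩ := h.exists_infDist_eq x (v := ε / 2) hε (by positivity)
    (by rw [infDist_zero_of_mem (interior_subset hx), sub_zero, abs_of_pos (by positivity)]
        linarith)
  rw [infDist_zero_of_mem (interior_subset (hball hy))] at hyε
  linarith

end MetricSpace

section InnerProductSpace

open scoped RealInnerProductSpace

variable {E : Type*} [NormedAddCommGroup E] [InnerProductSpace ℝ E] {C : Set E}

theorem norm_sub_smul_add_smul_sq (y a b : E) {α β : ℝ} (h : α + β = 1) :
    ‖y - (α • a + β • b)‖ ^ 2 = α * ‖y - a‖ ^ 2 + β * ‖y - b‖ ^ 2 - α * β * ‖a - b‖ ^ 2 := by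
  have hm : y - (α • a + β • b) = α • (y - a) + β • (y - b) := by
    match_scalars <;> linarith
  have hab : a - b = (y - b) - (y - a) := by abel
  rw [hm, hab, norm_add_sq_real, norm_sub_sq_real (y - b), norm_smul, norm_smul,
    real_inner_smul_left, real_inner_smul_right, mul_pow, mul_pow, Real.norm_eq_abs,
    Real.norm_eq_abs, sq_abs, sq_abs, real_inner_comm (y - b)]
  linear_combination (α * ‖y - a‖ ^ 2 + β * ‖y - b‖ ^ 2) * h

theorem sq_sub_le_norm_sub_smul_add_smul_sq {y a b : E} {α β ρ : ℝ} (hα : 0 ≤ α)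
    (hβ : 0 ≤ β) (hαβ : α + β = 1) (hρ : 0 ≤ ρ) (ha : ρ ≤ ‖y - a‖) (hb : ρ ≤ ‖y - b‖) :
    ρ ^ 2 - ‖a - b‖ ^ 2 / 4 ≤ ‖y - (α • a + β • b)‖ ^ 2 := by
  have hαβ4 : α * β ≤ 1 / 4 := by nlinarith [sq_nonneg (α - β)]
  rw [norm_sub_smul_add_smul_sq y a b hαβ]
  nlinarith [pow_le_pow_left₀ hρ ha 2, pow_le_pow_left₀ hρ hb 2, sq_nonneg ‖a - b‖]

theorem IsSubmetry.convex (hC : IsClosed C) (hne : C.Nonempty)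
    (h : IsSubmetry fun x => infNndist x C) : Convex ℝ C := by
  intro a ha b hb α β hα hβ hαβ
  by_contra hm
  set m := α • a + β • b
  set d := infDist m C
  set s := ‖a - b‖ ^ 2
  have hd : 0 < d := (hC.notMem_iff_infDist_pos hne).1 hm
  have hsd : 0 ≤ s / d := by positivity
  set r := s / d + d
  have hrd : r * d = s + d ^ 2 := by simp only [r]; field_simp
  -- `y` is at distance `≥ r + d / 2` from `a` and `b`, too far for `dist y m < r` as `r ≥ s / d`.
  obtain ⟨y, hym, hy⟩ := h.exists_infDist_eq m (r := r) (v := r + d / 2) (by positivity)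
    (by positivity) (by rw [abs_lt]; constructor <;> linarith)
  have hρa : r + d / 2 ≤ ‖y - a‖ := hy ▸ dist_eq_norm y a ▸ infDist_le_dist_of_mem ha
  have hρb : r + d / 2 ≤ ‖y - b‖ := hy ▸ dist_eq_norm y b ▸ infDist_le_dist_of_mem hb
  have hfar := sq_sub_le_norm_sub_smul_add_smul_sq hα hβ hαβ (by positivity) hρa hρb
  have hnear : ‖y - m‖ ^ 2 < r ^ 2 := by
    rw [← dist_eq_norm]; exact pow_lt_pow_left₀ hym dist_nonneg two_ne_zero
  nlinarith

theorem infDist_add_smul_eq {p w : E} (hp : p ∈ C) (hw : ‖w‖ = 1)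
    (hnormal : ∀ c ∈ C, ⟪w, c - p⟫ ≤ 0) {s : ℝ} (hs : 0 ≤ s) : infDist (p + s • w) C = s := by
  have hdist : dist (p + s • w) p = s := by
    rw [dist_eq_norm, add_sub_cancel_left, norm_smul, hw, mul_one, Real.norm_of_nonneg hs]
  refine le_antisymm ((infDist_le_dist_of_mem hp).trans_eq hdist)
    ((le_infDist ⟨p, hp⟩).2 fun c hc => ?_)
  have hsq : ‖p + s • w - c‖ ^ 2 = s ^ 2 - 2 * s * ⟪w, c - p⟫ + ‖c - p‖ ^ 2 := by
    rw [show p + s • w - c = s • w - (c - p) by abel, norm_sub_sq_real, real_inner_smul_left,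
      norm_smul, hw, Real.norm_of_nonneg hs]
    ring
  rw [dist_eq_norm, ← pow_le_pow_iff_left₀ hs (norm_nonneg _) two_ne_zero, hsq]
  nlinarith [hnormal c hc, sq_nonneg ‖c - p‖]

variable [FiniteDimensional ℝ E]

theorem Convex.exists_norm_eq_one_inner_sub_eq_zero (hconv : Convex ℝ C) (hne : C.Nonempty)
    (hint : interior C = ∅) : ∃ w : E, ‖w‖ = 1 ∧ ∀ a ∈ C, ∀ b ∈ C, ⟪w, a - b⟫ = 0 := by
  have hspan : affineSpan ℝ C ≠ ⊤ := fun h => by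
    simpa [hint] using hconv.interior_nonempty_iff_affineSpan_eq_top.2 h
  have hdir : (affineSpan ℝ C).direction ≠ ⊤ := fun h => hspan <|
    (AffineSubspace.direction_eq_top_iff_of_nonempty (hne.mono (subset_affineSpan ℝ C))).1 h
  obtain ⟨ν, hν, hν0⟩ := (Submodule.ne_bot_iff _).1 (Submodule.orthogonal_eq_bot_iff.not.2 hdir)
  refine ⟨‖ν‖⁻¹ • ν, norm_smul_inv_norm hν0, fun a ha b hb => ?_⟩
  have hab : a - b ∈ (affineSpan ℝ C).direction :=
    AffineSubspace.vsub_mem_direction (mem_affineSpan ℝ ha) (mem_affineSpan ℝ hb)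
  rw [real_inner_smul_left, real_inner_comm, (Submodule.mem_orthogonal _ _).1 hν _ hab, mul_zero]

theorem exists_mem_normal_eq_add_smul (hC : IsClosed C) (hconv : Convex ℝ C) (hne : C.Nonempty)
    (hint : interior C = ∅) (x : E) :
    ∃ p ∈ C, ∃ w : E, ‖w‖ = 1 ∧ (∀ c ∈ C, ⟪w, c - p⟫ ≤ 0) ∧ x = p + infDist x C • w := by
  by_cases hx : x ∈ C
  · obtain ⟨w, hw, horth⟩ := hconv.exists_norm_eq_one_inner_sub_eq_zero hne hint
    exact ⟨x, hx, w, hw, fun c hc => (horth c hc x hx).le, by simp [infDist_zero_of_mem hx]⟩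
  obtain ⟨p, hp, hpx⟩ := hC.exists_infDist_eq_dist hne x
  have hd : 0 < dist x p := hpx ▸ (hC.notMem_iff_infDist_pos hne).1 hx
  have hproj : ∀ c ∈ C, ⟪x - p, c - p⟫ ≤ 0 := by
    refine (norm_eq_iInf_iff_real_inner_le_zero hconv hp).1 ?_
    rw [← dist_eq_norm, ← hpx, infDist_eq_iInf]
    simp_rw [dist_eq_norm]
  refine ⟨p, hp, (dist x p)⁻¹ • (x - p), ?_, fun c hc => ?_, ?_⟩
  · rw [norm_smul, norm_inv, Real.norm_of_nonneg dist_nonneg, ← dist_eq_norm,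
      inv_mul_cancel₀ hd.ne']
  · rw [real_inner_smul_left]
    exact mul_nonpos_of_nonneg_of_nonpos (inv_nonneg.2 dist_nonneg) (hproj c hc)
  · rw [hpx, smul_smul, mul_inv_cancel₀ hd.ne', one_smul, add_sub_cancel]

theorem isSubmetry_infNndist (hC : IsClosed C) (hconv : Convex ℝ C) (hne : C.Nonempty)
    (hint : interior C = ∅) : IsSubmetry fun x => infNndist x C := by
  refine (lipschitz_infNndist_pt C).isSubmetry fun x r _ v hv => ?_
  obtain ⟨p, hp, w, hw, hnormal, hx⟩ := exists_mem_normal_eq_add_smul hC hconv hne hint x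
  refine ⟨p + (v : ℝ) • w, ?_, NNReal.eq ?_⟩
  · rw [mem_ball, NNReal.dist_eq, coe_infNndist] at hv
    rwa [mem_ball, hx, dist_add_left, dist_eq_norm, ← sub_smul, norm_smul, hw, mul_one,
      Real.norm_eq_abs]
  · rw [coe_infNndist, infDist_add_smul_eq hp hw hnormal v.coe_nonneg]

end InnerProductSpace

/-- For a nonempty closed set `C ⊆ ℝⁿ`, the distance function to `C` (valued in `ℝ≥0`)
is a submetry iff `C` is convex and has empty interior. -/
theorem infNndist_isSubmetry_iff (n : ℕ) (C : Set (EuclideanSpace ℝ (Fin n)))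
    (hC : IsClosed C) (hne : C.Nonempty) :
    IsSubmetry (fun x => Metric.infNndist x C) ↔ Convex ℝ C ∧ interior C = ∅ :=
  ⟨fun h => ⟨h.convex hC hne, h.interior_eq_empty⟩,
    fun ⟨hconv, hint⟩ => isSubmetry_infNndist hC hconv hne hint⟩
end

section
/- Let X and Y be metric spaces with X nonempty, and let P : X → Y be a map. Then P is a submetry if and only if P is surjective and for every y ∈ Y and every x ∈ X, dist (P x) y = Metric.infDist x (P ⁻¹' {y}). -/
/-- A map is a submetry iff it is surjective and distances to points in the base
are realized as distances to the corresponding fibers. -/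
theorem isSubmetry_iff_surjective_and_dist_eq_infDist
    {X Y : Type*} [MetricSpace X] [MetricSpace Y] [Nonempty X] (P : X → Y) :
    IsSubmetry P ↔
      Function.Surjective P ∧ ∀ (y : Y) (x : X), dist (P x) y = Metric.infDist x (P ⁻¹' {y}) := by
  constructor
  · intro h
    have hsurj : Function.Surjective P := by
      intro y
      obtain ⟨x⟩ := ‹Nonempty X›
      have hy : y ∈ Metric.ball (P x) (dist (P x) y + 1) := by
        rw [Metric.mem_ball, dist_comm]
        linarith
      rw [← h x _ (by linarith [dist_nonneg (x := P x) (y := y)])] at hy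
      obtain ⟨z, _, hz⟩ := hy
      exact ⟨z, hz⟩
    have lip : ∀ a b : X, dist (P a) (P b) ≤ dist a b := by
      intro a b
      by_contra hc
      push_neg at hc
      have hr : 0 < dist (P a) (P b) := lt_of_le_of_lt dist_nonneg hc
      have hb : b ∈ Metric.ball a (dist (P a) (P b)) := by rwa [Metric.mem_ball, dist_comm]
      have : P b ∈ Metric.ball (P a) (dist (P a) (P b)) :=
        h a _ hr ▸ Set.mem_image_of_mem P hb
      exact lt_irrefl _ (Metric.mem_ball.mp (by rwa [dist_comm] at this))
    refine ⟨hsurj, fun y x => ?_⟩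
    have hne : (P ⁻¹' {y}).Nonempty := (hsurj y).imp fun z hz => hz
    apply le_antisymm
    · by_contra hc
      push_neg at hc
      obtain ⟨z, hz, hzd⟩ := (Metric.infDist_lt_iff hne).mp hc
      have := lip x z
      rw [show P z = y from hz] at this
      linarith
    · refine le_of_forall_pos_lt_add fun ε hε => ?_
      have hy : y ∈ Metric.ball (P x) (dist (P x) y + ε) := by
        rw [Metric.mem_ball, dist_comm]; linarith
      rw [← h x _ (by linarith [dist_nonneg (x := P x) (y := y)])] at hy
      obtain ⟨z, hz, rfl⟩ := hy
      calc Metric.infDist x (P ⁻¹' {P z}) ≤ dist x z := Metric.infDist_le_dist_of_mem rfl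
        _ < dist (P x) (P z) + ε := by rw [dist_comm]; exact Metric.mem_ball.mp hz
  · rintro ⟨hsurj, hdist⟩ x r hr
    ext y
    constructor
    · rintro ⟨z, hz, rfl⟩
      rw [Metric.mem_ball, dist_comm]
      calc dist (P x) (P z) = Metric.infDist x (P ⁻¹' {P z}) := hdist _ x
        _ ≤ dist x z := Metric.infDist_le_dist_of_mem rfl
        _ < r := by rw [dist_comm]; exact Metric.mem_ball.mp hz
    · intro hy
      have hne : (P ⁻¹' {y}).Nonempty := (hsurj y).imp fun z hz => hz
      have hlt : Metric.infDist x (P ⁻¹' {y}) < r := by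
        rw [← hdist y x, dist_comm]; exact Metric.mem_ball.mp hy
      obtain ⟨z, hz, hzr⟩ := (Metric.infDist_lt_iff hne).mp hlt
      exact ⟨z, by rwa [Metric.mem_ball, dist_comm], hz⟩
end

section
/- Let X and Y be metric spaces with X nonempty, and let P : X → Y be a submetry. Then: (i) if X is a compact space then Y is a compact space; (ii) if X is a proper metric space (all closed balls compact) then Y is a proper metric space; (iii) if X is a complete metric space then Y is a complete metric space. -/
/-!
A submetry is 1-Lipschitz and lifts every step `P x ⇝ y` to a step `x ⇝ x'` of length at most
`dist (P x) y + ε`. Compact and proper: the base is the continuous image of the total space, and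
every closed ball of the base lies in the image of a slightly larger ball. Complete: a rapidly
Cauchy sequence of the base lifts, step by step, to a rapidly Cauchy sequence of the total space,
whose limit projects to a limit of the original sequence.
-/

open Metric

namespace IsSubmetry

variable {X Y : Type*} [MetricSpace X] [MetricSpace Y] {P : X → Y}

theorem exists_lift_dist_lt (hP : IsSubmetry P) {x : X} {y : Y} {r : ℝ}
    (h : dist (P x) y < r) : ∃ x', P x' = y ∧ dist x x' < r := by
  have hy : y ∈ P '' ball x r := by
    rw [hP x r (dist_nonneg.trans_lt h)]
    exact mem_ball'.2 h
  obtain ⟨x', hx', rfl⟩ := hy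
  exact ⟨x', rfl, mem_ball'.1 hx'⟩

theorem lipschitzWith (hP : IsSubmetry P) : LipschitzWith 1 P := by
  refine LipschitzWith.of_dist_le_mul fun a b => ?_
  rw [NNReal.coe_one, one_mul]
  refine le_of_forall_gt fun r hr => ?_
  have hb : P b ∈ ball (P a) r := by
    rw [← hP a r (dist_nonneg.trans_lt hr)]
    exact Set.mem_image_of_mem P (mem_ball'.2 hr)
  exact mem_ball'.1 hb

theorem surjective [Nonempty X] (hP : IsSubmetry P) : Function.Surjective P := fun y =>
  let x₀ : X := Classical.arbitrary X
  (hP.exists_lift_dist_lt (lt_add_one (dist (P x₀) y))).imp fun _ h => h.1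

theorem closedBall_subset_image_ball (hP : IsSubmetry P) (x : X) {r s : ℝ} (hrs : r < s) :
    closedBall (P x) r ⊆ P '' ball x s := fun _ hy =>
  let ⟨x', hx', hdist⟩ := hP.exists_lift_dist_lt ((mem_closedBall'.1 hy).trans_lt hrs)
  ⟨x', mem_ball'.2 hdist, hx'⟩

theorem exists_seq_lift (hP : IsSubmetry P) {u : ℕ → Y} {ε : ℕ → ℝ}
    (hu : ∀ n, dist (u n) (u (n + 1)) < ε n) {x₀ : X} (hx₀ : P x₀ = u 0) :
    ∃ f : ℕ → X, (∀ n, P (f n) = u n) ∧ ∀ n, dist (f n) (f (n + 1)) < ε n := by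
  have step : ∀ n (x : {x // P x = u n}), ∃ x' : {x' // P x' = u (n + 1)}, dist x.1 x'.1 < ε n :=
    fun n x => by
      obtain ⟨x', hx', hdist⟩ := hP.exists_lift_dist_lt (x.2 ▸ hu n)
      exact ⟨⟨x', hx'⟩, hdist⟩
  choose next hnext using step
  let f : (n : ℕ) → {x // P x = u n} := fun n => Nat.rec ⟨x₀, hx₀⟩ next n
  exact ⟨fun n => (f n).1, fun n => (f n).2, fun n => hnext n (f n)⟩

theorem compactSpace [Nonempty X] [CompactSpace X] (hP : IsSubmetry P) : CompactSpace Y :=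
  hP.surjective.compactSpace hP.lipschitzWith.continuous

theorem properSpace [Nonempty X] [ProperSpace X] (hP : IsSubmetry P) : ProperSpace Y := by
  refine ⟨fun y r => ?_⟩
  obtain ⟨x, rfl⟩ := hP.surjective y
  have hcompact : IsCompact (P '' closedBall x (r + 1)) :=
    (isCompact_closedBall x (r + 1)).image hP.lipschitzWith.continuous
  exact hcompact.of_isClosed_subset isClosed_closedBall
    ((hP.closedBall_subset_image_ball x (lt_add_one r)).trans
      (Set.image_mono ball_subset_closedBall))

theorem completeSpace [Nonempty X] [CompleteSpace X] (hP : IsSubmetry P) : CompleteSpace Y := by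
  refine complete_of_convergent_controlled_sequences (fun n => (1 / 2 : ℝ) ^ n)
    (fun n => by positivity) fun u hu => ?_
  obtain ⟨x₀, hx₀⟩ := hP.surjective (u 0)
  obtain ⟨f, hfu, hf⟩ := hP.exists_seq_lift (fun n => hu n n (n + 1) le_rfl n.le_succ) hx₀
  have hcauchy : CauchySeq f :=
    cauchySeq_of_le_geometric (1 / 2) 1 (by norm_num) fun n => by simpa using (hf n).le
  obtain ⟨l, hl⟩ := cauchySeq_tendsto_of_complete hcauchy
  refine ⟨P l, ?_⟩
  have hPf : P ∘ f = u := funext hfu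
  exact hPf ▸ (hP.lipschitzWith.continuous.tendsto l).comp hl

end IsSubmetry

/-- Compactness, properness and completeness of the total space are inherited
by the base of a submetry. -/
theorem submetry_inherits_properties {X Y : Type*} [MetricSpace X] [MetricSpace Y]
    [Nonempty X] (P : X → Y) (hP : IsSubmetry P) :
    (CompactSpace X → CompactSpace Y) ∧
      (ProperSpace X → ProperSpace Y) ∧
      (CompleteSpace X → CompleteSpace Y) :=
  ⟨fun _ => hP.compactSpace, fun _ => hP.properSpace, fun _ => hP.completeSpace⟩
end

section
/- Let X be a nonempty connected metric space, Y a metric space, and P : X → Y a submetry. Then either Y is a subsingleton (has at most one point), or for every y ∈ Y the fiber P ⁻¹' {y} has empty interior in X (so every fiber, being closed, is nowhere dense in X). -/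
/-- If the total space of a submetry is connected, either the base is a single
point or every fiber has empty interior (hence is nowhere dense). -/
theorem submetry_connected_fibers_nowhere_dense {X Y : Type*} [MetricSpace X] [MetricSpace Y]
    [Nonempty X] [ConnectedSpace X] (P : X → Y) (hP : IsSubmetry P) :
    Subsingleton Y ∨ ∀ y : Y, interior (P ⁻¹' {y}) = ∅ := by
  rcases subsingleton_or_nontrivial Y with h | h
  · exact Or.inl h
  right
  intro y
  by_contra hne
  rw [← Set.not_nonempty_iff_eq_empty, not_not] at hne
  obtain ⟨x, hx⟩ := hne
  obtain ⟨r, hr, hball⟩ := Metric.isOpen_iff.1 isOpen_interior x hx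
  have hxy : P x = y := by have h' := interior_subset hx; simpa using h'
  have hsub : Metric.ball x r ⊆ P ⁻¹' {y} := hball.trans interior_subset
  have hb : Metric.ball y r = {y} := by
    apply Set.Subset.antisymm
    · rw [← hxy, ← hP x r hr]
      rintro _ ⟨a, ha, rfl⟩
      rw [hxy]
      exact hsub ha
    · intro z hz
      simp only [Set.mem_singleton_iff] at hz
      subst hz
      exact Metric.mem_ball_self hr
  have hcont : Continuous P := by
    have : LipschitzWith 1 P := by
      apply LipschitzWith.of_dist_le_mul
      intro a b
      rw [NNReal.coe_one, one_mul]
      refine le_of_forall_pos_lt_add fun ε hε => ?_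
      have hpos : 0 < dist a b + ε := add_pos_of_nonneg_of_pos dist_nonneg hε
      have hmem : b ∈ Metric.ball a (dist a b + ε) := by
        rw [Metric.mem_ball, dist_comm]; linarith
      have h2 : P b ∈ Metric.ball (P a) (dist a b + ε) := by
        rw [← hP a _ hpos]; exact ⟨b, hmem, rfl⟩
      rw [Metric.mem_ball, dist_comm] at h2
      exact h2
    exact this.continuous
  have hsurj : Function.Surjective P := by
    intro z
    have hpos : 0 < dist z y + 1 := add_pos_of_nonneg_of_pos dist_nonneg one_pos
    have hz : z ∈ Metric.ball (P x) (dist z y + 1) := by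
      rw [hxy, Metric.mem_ball]; linarith
    rw [← hP x _ hpos] at hz
    obtain ⟨a, _, ha⟩ := hz
    exact ⟨a, ha⟩
  haveI hpc : PreconnectedSpace Y :=
    ⟨by rw [← hsurj.range_eq]; exact isPreconnected_range hcont⟩
  have hclopen : IsClopen ({y} : Set Y) :=
    ⟨isClosed_singleton, by rw [← hb]; exact Metric.isOpen_ball⟩
  have huniv := hclopen.eq_univ (Set.singleton_nonempty y)
  obtain ⟨a, b, hab⟩ := h
  have ha : a ∈ ({y} : Set Y) := huniv ▸ Set.mem_univ a
  have hbmem : b ∈ ({y} : Set Y) := huniv ▸ Set.mem_univ b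
  exact hab (ha.trans hbmem.symm)
end

section
/- Let U be a locally compact metric space, m a natural number, E = EuclideanSpace ℝ (Fin m), c ∈ E and R > 0, and set B = Metric.ball c R. Let f : ℕ → U → E and g : U → E be such that each f j and g is continuous, is an open map (IsOpenMap), and takes all its values in B. Assume the maps converge continuously to g: for every x ∈ U and every sequence u : ℕ → U with u tending to x, the sequence j ↦ f j (u j) tends to g x. Let p ∈ B be such that the preimage C = g ⁻¹' {p} is nonempty and compact. Then for all sufficiently large j, the preimage (f j) ⁻¹' {p} is nonempty. -/
open Filter Topology Set

/-!
Suppose the fibres of `f j` over `p` are empty along a subsequence. Take a compact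
neighbourhood `K` of the compact fibre `g ⁻¹' {p}` and a point `x₀` of that fibre. An open map
that misses `p` cannot bring `dist (f j x) p` to its minimum over `K` at an interior point of `K`,
since the open image of `interior K` contains points closer to `p`. So there are points `x_j` on
the compact set `K \ interior K` with `dist (f j x_j) p ≤ dist (f j x₀) p → 0`. A limit point `x`
of the `x_j` then has `g x = p` by continuous convergence, although `x` lies outside the interior
of `K`, which contains the fibre.
-/

theorem IsOpen.exists_dist_lt {E : Type*} [NormedAddCommGroup E] [NormedSpace ℝ E]
    {V : Set E} (hV : IsOpen V) {q p : E} (hq : q ∈ V) (hqp : q ≠ p) :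
    ∃ q' ∈ V, dist q' p < dist q p := by
  have hline : Tendsto (fun t : ℝ => AffineMap.lineMap q p t) (𝓝[>] 0) (𝓝 q) := by
    simpa using ((AffineMap.lineMap_continuous (p := q) (q := p)).tendsto (0 : ℝ)).mono_left
      nhdsWithin_le_nhds
  obtain ⟨t, htV, ht⟩ :=
    ((hline.eventually (hV.mem_nhds hq)).and (Ioo_mem_nhdsGT one_pos)).exists
  refine ⟨_, htV, ?_⟩
  rw [dist_lineMap_right, Real.norm_eq_abs, abs_of_pos (by linarith [ht.2])]
  nlinarith [dist_pos.2 hqp, ht.1]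

theorem IsOpenMap.exists_mem_diff_interior_dist_le {X E : Type*} [TopologicalSpace X]
    [NormedAddCommGroup E] [NormedSpace ℝ E] {f : X → E} (hfo : IsOpenMap f) {K : Set X}
    (hfK : ContinuousOn f K) (hK : IsCompact K) {x₀ : X} (hx₀ : x₀ ∈ K) {p : E}
    (hp : p ∉ range f) : ∃ x ∈ K \ interior K, dist (f x) p ≤ dist (f x₀) p := by
  obtain ⟨x, hxK, hmin⟩ :=
    hK.exists_isMinOn (f := fun x => dist (f x) p) ⟨x₀, hx₀⟩
      ((continuous_id.dist continuous_const).comp_continuousOn hfK)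
  refine ⟨x, ⟨hxK, fun hx => ?_⟩, hmin hx₀⟩
  obtain ⟨_, ⟨y, hy, rfl⟩, hlt⟩ :=
    (hfo _ isOpen_interior).exists_dist_lt (mem_image_of_mem f hx) fun h => hp ⟨x, h⟩
  exact (hmin (interior_subset hy)).not_gt hlt

theorem tendsto_extend_of_strictMono {X : Type*} [TopologicalSpace X] {σ : ℕ → ℕ}
    (hσ : StrictMono σ) {v : ℕ → X} {x : X} (hv : Tendsto v atTop (𝓝 x)) :
    Tendsto (Function.extend σ v fun _ => x) atTop (𝓝 x) := by
  intro N hN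
  obtain ⟨L, hL⟩ := eventually_atTop.1 (hv hN)
  refine eventually_atTop.2 ⟨σ L, fun j hj => ?_⟩
  by_cases h : ∃ l, σ l = j
  · obtain ⟨l, rfl⟩ := h
    rw [hσ.injective.extend_apply]
    exact hL l (hσ.le_iff_le.1 hj)
  · rw [Function.extend_apply' _ _ _ h]
    exact mem_of_mem_nhds hN

section ContinuousConvergence

variable {X Y : Type*} [TopologicalSpace X] {f : ℕ → X → Y} {g : X → Y}

theorem tendsto_subseq_of_continuous_convergence [TopologicalSpace Y]
    (hconv : ∀ (x : X) (u : ℕ → X), Tendsto u atTop (𝓝 x) →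
      Tendsto (fun j => f j (u j)) atTop (𝓝 (g x)))
    {σ : ℕ → ℕ} (hσ : StrictMono σ) {v : ℕ → X} {x : X} (hv : Tendsto v atTop (𝓝 x)) :
    Tendsto (fun l => f (σ l) (v l)) atTop (𝓝 (g x)) := by
  refine ((hconv x _ (tendsto_extend_of_strictMono hσ hv)).comp hσ.tendsto_atTop).congr
    fun l => ?_
  simp only [Function.comp_apply, hσ.injective.extend_apply]

theorem eq_of_continuous_convergence_of_dist_le [MetricSpace Y]
    (hconv : ∀ (x : X) (u : ℕ → X), Tendsto u atTop (𝓝 x) →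
      Tendsto (fun j => f j (u j)) atTop (𝓝 (g x)))
    {σ : ℕ → ℕ} (hσ : StrictMono σ) {v : ℕ → X} {x x₀ : X} (hv : Tendsto v atTop (𝓝 x))
    {p : Y} (hx₀ : g x₀ = p) (hle : ∀ l, dist (f (σ l) (v l)) p ≤ dist (f (σ l) x₀) p) :
    g x = p := by
  have hx₀σ : Tendsto (fun l => f (σ l) x₀) atTop (𝓝 p) :=
    hx₀ ▸ tendsto_subseq_of_continuous_convergence hconv hσ tendsto_const_nhds
  have hvp : Tendsto (fun l => f (σ l) (v l)) atTop (𝓝 p) :=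
    tendsto_iff_dist_tendsto_zero.2 <|
      squeeze_zero (fun _ => dist_nonneg) hle (tendsto_iff_dist_tendsto_zero.1 hx₀σ)
  exact tendsto_nhds_unique (tendsto_subseq_of_continuous_convergence hconv hσ hv) hvp

end ContinuousConvergence

theorem open_maps_eventually_surjective_at_point_general
    {U : Type*} [MetricSpace U] [LocallyCompactSpace U]
    (m : ℕ)
    (f : ℕ → U → EuclideanSpace ℝ (Fin m)) (g : U → EuclideanSpace ℝ (Fin m))
    (hfc : ∀ j, Continuous (f j)) (hfo : ∀ j, IsOpenMap (f j))
    (hconv : ∀ (x : U) (u : ℕ → U), Tendsto u atTop (𝓝 x) →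
      Tendsto (fun j => f j (u j)) atTop (𝓝 (g x)))
    (p : EuclideanSpace ℝ (Fin m))
    (hCne : (g ⁻¹' {p}).Nonempty) (hCcpt : IsCompact (g ⁻¹' {p})) :
    ∀ᶠ j in atTop, ((f j) ⁻¹' {p}).Nonempty := by
  by_contra h
  obtain ⟨φ, hφ, hφempty⟩ := extraction_of_frequently_atTop (not_eventually.1 h)
  obtain ⟨K, hK, hCK⟩ := exists_compact_superset hCcpt
  obtain ⟨x₀, hx₀⟩ := hCne
  choose v hvK hv using fun k =>
    (hfo (φ k)).exists_mem_diff_interior_dist_le (hfc (φ k)).continuousOn hK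
      (interior_subset (hCK hx₀)) fun ⟨x, hx⟩ => hφempty k ⟨x, hx⟩
  obtain ⟨x, hx, ψ, hψ, hvx⟩ := (hK.diff isOpen_interior).tendsto_subseq hvK
  exact hx.2 (hCK (eq_of_continuous_convergence_of_dist_le hconv (hφ.comp hψ) hvx hx₀
    fun l => hv (ψ l)))

/-- A Hurwitz-type theorem for open maps: if continuous open maps `f j` with
values in a Euclidean ball converge continuously to a continuous open map `g`,
and the fiber of `g` over `p` is nonempty and compact, then the fibers of the
`f j` over `p` are eventually nonempty. -/
theorem open_maps_eventually_surjective_at_point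
    {U : Type*} [MetricSpace U] [LocallyCompactSpace U]
    (m : ℕ) (c : EuclideanSpace ℝ (Fin m)) (R : ℝ) (hR : 0 < R)
    (B : Set (EuclideanSpace ℝ (Fin m))) (hB : B = Metric.ball c R)
    (f : ℕ → U → EuclideanSpace ℝ (Fin m)) (g : U → EuclideanSpace ℝ (Fin m))
    (hfc : ∀ j, Continuous (f j)) (hfo : ∀ j, IsOpenMap (f j))
    (hfB : ∀ j, ∀ x, f j x ∈ B)
    (hgc : Continuous g) (hgo : IsOpenMap g) (hgB : ∀ x, g x ∈ B)
    (hconv : ∀ (x : U) (u : ℕ → U), Tendsto u atTop (𝓝 x) →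
      Tendsto (fun j => f j (u j)) atTop (𝓝 (g x)))
    (p : EuclideanSpace ℝ (Fin m)) (hp : p ∈ B)
    (hCne : (g ⁻¹' {p}).Nonempty) (hCcpt : IsCompact (g ⁻¹' {p})) :
    ∀ᶠ j in atTop, ((f j) ⁻¹' {p}).Nonempty :=
  open_maps_eventually_surjective_at_point_general m f g hfc hfo hconv p hCne hCcpt
end

section
/- Let k be a natural number, E = EuclideanSpace ℝ (Fin k), O ⊆ E an open set, K ≥ 0, and b : E → E a vector field that is Lipschitz on O (LipschitzOnWith K b O). Let p ∈ O, let δ > 0, let O₀ ⊆ O be an open neighborhood of p, and let φ : ℝ → E → E be a local flow of b on O₀: for every y ∈ O₀, φ 0 y = y, and for every t with |t| < δ one has φ t y ∈ O and the curve s ↦ φ s y has derivative b (φ t y) at t (HasDerivAt). Then there exists A > 0 with 1/A ≤ δ such that for all y, z ∈ O₀ and all real t with |t| ≤ 1/A, ‖(φ t z − φ t y) − (z − y)‖ ≤ A * |t| * ‖z − y‖. -/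
/-!
The difference `F s = φ s z - φ s y` of two flow lines satisfies `‖F'‖ ≤ K ‖F‖`, so Grönwall's
inequality, run forwards and backwards in time, gives `‖F s‖ ≤ e ‖z - y‖` as long as `K |s| ≤ 1`.
Hence `‖F'‖ ≤ K e ‖z - y‖` there, and the mean value inequality bounds `‖F t - F 0‖`.
-/

open Set Real

section Gronwall

variable {E : Type*} [NormedAddCommGroup E] [NormedSpace ℝ E] {f f' : ℝ → E} {K T : ℝ}

theorem norm_le_norm_zero_mul_exp_of_norm_deriv_le
    (hf : ∀ s ∈ Icc 0 T, HasDerivAt f (f' s) s) (hf' : ∀ s ∈ Icc 0 T, ‖f' s‖ ≤ K * ‖f s‖) :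
    ∀ s ∈ Icc 0 T, ‖f s‖ ≤ ‖f 0‖ * exp (K * s) := by
  intro s hs
  have := norm_le_gronwallBound_of_norm_deriv_right_le (ε := 0)
    (fun u hu => (hf u hu).continuousAt.continuousWithinAt)
    (fun u hu => (hf u (Ico_subset_Icc_self hu)).hasDerivWithinAt) le_rfl
    (fun u hu => by simpa using hf' u (Ico_subset_Icc_self hu)) s hs
  simpa [gronwallBound_ε0] using this

theorem norm_le_norm_zero_mul_exp_abs_of_norm_deriv_le
    (hf : ∀ s ∈ Icc (-T) T, HasDerivAt f (f' s) s)
    (hf' : ∀ s ∈ Icc (-T) T, ‖f' s‖ ≤ K * ‖f s‖) :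
    ∀ s ∈ Icc (-T) T, ‖f s‖ ≤ ‖f 0‖ * exp (K * |s|) := by
  have pos_mem {u : ℝ} (hu : u ∈ Icc 0 T) : u ∈ Icc (-T) T := ⟨by linarith [hu.1, hu.2], hu.2⟩
  have neg_mem {u : ℝ} (hu : u ∈ Icc 0 T) : -u ∈ Icc (-T) T :=
    ⟨neg_le_neg hu.2, by linarith [hu.1, hu.2]⟩
  have forward := norm_le_norm_zero_mul_exp_of_norm_deriv_le (fun u hu => hf u (pos_mem hu))
    (fun u hu => hf' u (pos_mem hu))
  have backward := norm_le_norm_zero_mul_exp_of_norm_deriv_le (f := fun u => f (-u))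
    (f' := fun u => -f' (-u)) (K := K)
    (fun u hu => by
      simpa [Function.comp_def] using (hf (-u) (neg_mem hu)).scomp u (hasDerivAt_neg u))
    (fun u hu => by simpa using hf' (-u) (neg_mem hu))
  intro s hs
  rcases le_total 0 s with hs0 | hs0
  · simpa [abs_of_nonneg hs0] using forward s ⟨hs0, hs.2⟩
  · simpa [abs_of_nonpos hs0] using backward (-s) ⟨neg_nonneg.2 hs0, neg_le.1 hs.1⟩

theorem norm_sub_apply_zero_le_of_norm_deriv_le (hK : 0 ≤ K) (hKT : K * T ≤ 1)
    (hf : ∀ s ∈ Icc (-T) T, HasDerivAt f (f' s) s)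
    (hf' : ∀ s ∈ Icc (-T) T, ‖f' s‖ ≤ K * ‖f s‖) :
    ∀ t ∈ Icc (-T) T, ‖f t - f 0‖ ≤ K * exp 1 * |t| * ‖f 0‖ := by
  have deriv_bound : ∀ s ∈ Icc (-T) T, ‖f' s‖ ≤ K * exp 1 * ‖f 0‖ := by
    intro s hs
    have hKs : K * |s| ≤ 1 := (mul_le_mul_of_nonneg_left (abs_le.2 hs) hK).trans hKT
    calc ‖f' s‖ ≤ K * (‖f 0‖ * exp (K * |s|)) :=
          (hf' s hs).trans (mul_le_mul_of_nonneg_left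
            (norm_le_norm_zero_mul_exp_abs_of_norm_deriv_le hf hf' s hs) hK)
      _ ≤ K * (‖f 0‖ * exp 1) := by gcongr
      _ = K * exp 1 * ‖f 0‖ := by ring
  intro t ht
  have hT : 0 ≤ T := by linarith [ht.1, ht.2]
  have := (convex_Icc (-T) T).norm_image_sub_le_of_norm_hasDerivWithin_le
    (fun s hs => (hf s hs).hasDerivWithinAt) deriv_bound ⟨by linarith, hT⟩ ht
  simpa [mul_right_comm] using this

end Gronwall

theorem flow_of_lipschitz_vector_field_almost_parallel_general
    (k : ℕ) (O : Set (EuclideanSpace ℝ (Fin k)))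
    (K : NNReal) (b : EuclideanSpace ℝ (Fin k) → EuclideanSpace ℝ (Fin k))
    (hb : LipschitzOnWith K b O)
    (δ : ℝ) (hδ : 0 < δ)
    (O₀ : Set (EuclideanSpace ℝ (Fin k)))
    (φ : ℝ → EuclideanSpace ℝ (Fin k) → EuclideanSpace ℝ (Fin k))
    (hφ0 : ∀ y ∈ O₀, φ 0 y = y)
    (hφ : ∀ y ∈ O₀, ∀ t : ℝ, |t| < δ →
      φ t y ∈ O ∧ HasDerivAt (fun s => φ s y) (b (φ t y)) t) :
    ∃ A : ℝ, 0 < A ∧ 1 / A ≤ δ ∧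
      ∀ y ∈ O₀, ∀ z ∈ O₀, ∀ t : ℝ, |t| ≤ 1 / A →
        ‖(φ t z - φ t y) - (z - y)‖ ≤ A * |t| * ‖z - y‖ := by
  -- `2 / δ` keeps `1 / A` strictly below `δ`; `K e ≤ A` gives `K / A ≤ 1` and the final constant.
  set A : ℝ := 2 / δ + K * exp 1
  have hKe : 0 ≤ (K : ℝ) * exp 1 := by positivity
  have hA : 0 < A := by positivity
  have hTδ : 1 / A < δ :=
    calc 1 / A ≤ 1 / (2 / δ) := one_div_le_one_div_of_le (by positivity) (by linarith)
      _ < δ := by rw [one_div_div]; linarith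
  have hKT : (K : ℝ) * (1 / A) ≤ 1 := by
    rw [mul_one_div, div_le_one hA]
    nlinarith [add_one_le_exp 1, K.coe_nonneg, div_pos two_pos hδ]
  refine ⟨A, hA, hTδ.le, fun y hy z hz t ht => ?_⟩
  have hsδ : ∀ s ∈ Icc (-(1 / A)) (1 / A), |s| < δ := fun s hs => (abs_le.2 hs).trans_lt hTδ
  have key := norm_sub_apply_zero_le_of_norm_deriv_le (f := fun s => φ s z - φ s y)
    (f' := fun s => b (φ s z) - b (φ s y)) K.coe_nonneg hKT
    (fun s hs => (hφ z hz s (hsδ s hs)).2.sub (hφ y hy s (hsδ s hs)).2)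
    (fun s hs => by
      simpa [dist_eq_norm] using
        hb.dist_le_mul _ (hφ z hz s (hsδ s hs)).1 _ (hφ y hy s (hsδ s hs)).1)
    t (abs_le.1 ht)
  simp only [hφ0 z hz, hφ0 y hy] at key
  refine key.trans ?_
  gcongr
  linarith [div_pos two_pos hδ]

/-- Near a point, the flow of a Lipschitz vector field moves pairs of points
almost in parallel: `‖(φ_t z − φ_t y) − (z − y)‖ ≤ A t ‖z − y‖` for small `t`. -/
theorem flow_of_lipschitz_vector_field_almost_parallel
    (k : ℕ) (O : Set (EuclideanSpace ℝ (Fin k))) (hO : IsOpen O)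
    (K : NNReal) (b : EuclideanSpace ℝ (Fin k) → EuclideanSpace ℝ (Fin k))
    (hb : LipschitzOnWith K b O)
    (p : EuclideanSpace ℝ (Fin k)) (hp : p ∈ O)
    (δ : ℝ) (hδ : 0 < δ)
    (O₀ : Set (EuclideanSpace ℝ (Fin k))) (hO₀open : IsOpen O₀) (hpO₀ : p ∈ O₀)
    (hO₀sub : O₀ ⊆ O)
    (φ : ℝ → EuclideanSpace ℝ (Fin k) → EuclideanSpace ℝ (Fin k))
    (hφ0 : ∀ y ∈ O₀, φ 0 y = y)
    (hφ : ∀ y ∈ O₀, ∀ t : ℝ, |t| < δ →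
      φ t y ∈ O ∧ HasDerivAt (fun s => φ s y) (b (φ t y)) t) :
    ∃ A : ℝ, 0 < A ∧ 1 / A ≤ δ ∧
      ∀ y ∈ O₀, ∀ z ∈ O₀, ∀ t : ℝ, |t| ≤ 1 / A →
        ‖(φ t z - φ t y) - (z - y)‖ ≤ A * |t| * ‖z - y‖ :=
  flow_of_lipschitz_vector_field_almost_parallel_general k O K b hb δ hδ O₀ φ hφ0 hφ
end
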